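/- arXiv:0802.0397 — 9 statements merged into one kernel-verified Lean document; each statement's English description precedes it below -/
import Mathlib

section
/- Let 0 < q < 1/2 and let f be a solution of Schilling's problem. If f vanishes on the interval [0, q), then f vanishes on [0, Q), where Q = q/(1-q). -/
theorem schilling_vanish_Ico (q : ℝ) (hq : 0 < q) (hq1 : q < 1 / 2)
    (f : ℝ → ℝ)
    (heq : ∀ x : ℝ, f (q * x) = 1 / (4 * q) * (f (x - 1) + f (x + 1) + 2 * f x))
    (hQ : ∀ x : ℝ, |x| > q / (1 - q) → f x = 0)
    (h0 : ∀ x : ℝ, 0 ≤ x → x < q → f x = 0) :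
    ∀ x : ℝ, 0 ≤ x → x < q / (1 - q) → f x = 0 := by
  have h1q : (0:ℝ) < 1 - q := by linarith
  set Q := q / (1 - q) with hQdef
  have hQpos : 0 < Q := div_pos hq h1q
  have hQlt1 : Q < 1 := by
    rw [hQdef, div_lt_one h1q]; linarith
  have key : ∀ n : ℕ, ∀ x : ℝ, 0 ≤ x → x < Q * (1 - q ^ (n+1)) → f x = 0 := by
    intro n
    induction n with
    | zero =>
      intro x hx0 hx
      apply h0 x hx0
      have hid : Q * (1 - q ^ 1) = q := by
        rw [hQdef]; field_simp
      rw [hid] at hx; exact hx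
    | succ n ih =>
      intro x hx0 hx
      by_cases hxq : x < q
      · exact h0 x hx0 hxq
      · push_neg at hxq
        set y := x / q with hydef
        have hxy : x = q * y := by rw [hydef]; field_simp
        have hy1 : 1 ≤ y := (le_div_iff₀ hq).2 (by linarith)
        have hQq : Q * (1 - q) = q := by
          rw [hQdef]; field_simp
        have hid : q * (1 + Q * (1 - q ^ (n+1))) = Q * (1 - q ^ (n+1+1)) := by
          linear_combination -hQq
        have hyub : y - 1 < Q * (1 - q ^ (n+1)) := by
          have : x < q * (1 + Q * (1 - q ^ (n+1))) := by rw [hid]; exact hx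
          have hylt : y < 1 + Q * (1 - q ^ (n+1)) := by
            rw [hydef, div_lt_iff₀ hq]; nlinarith
          linarith
        have h1 : f (y - 1) = 0 := ih (y - 1) (by linarith) hyub
        have h2 : f (y + 1) = 0 := by
          apply hQ
          rw [abs_of_pos (by linarith)]
          show Q < y + 1
          linarith
        have h3 : f y = 0 := by
          apply hQ
          rw [abs_of_pos (by linarith)]
          show Q < y
          linarith
        rw [hxy, heq y, h1, h2, h3]; ring
  intro x hx0 hxQ
  obtain ⟨n, hn⟩ := exists_pow_lt_of_lt_one (div_pos (by linarith) hQpos : (0:ℝ) < (Q - x) / Q)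
    (by linarith : q < 1)
  apply key n x hx0
  have hq1n : q ^ (n+1) ≤ q ^ n := by
    apply pow_le_pow_of_le_one (le_of_lt hq) (by linarith) (by omega)
  have : q ^ (n+1) < (Q - x) / Q := lt_of_le_of_lt hq1n hn
  have := (lt_div_iff₀ hQpos).mp this
  nlinarith
end

section
/- Let 0 < q < 1/2 and let f be a solution of Schilling's problem. If f vanishes on the interval (0, q), then f is identically zero. -/
/-!
For `u ≥ 0` the equation at `u + 1` reads `f (q (u + 1)) = f u / (4q)`, the other two terms lying
outside the support. The map `u ↦ q (u + 1)` contracts towards its fixed point `Q = q / (1 - q)`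
with ratio `q`, so the zeros on `(0, q]` propagate to all of `(0, Q)`. For `-1 < t < 0` the
equation at `t + 1` has left side `f (q (t + 1)) = 0`, so `f t = -2 f (t + 1)`, which carries the
zeros over to `(-1, 0)`. The one remaining point `Q` is settled by chaining this relation with the
equation at `Q - 2`, which gives `f Q = 4q f (Q + 1 - 3q)`.
-/

def SchillingEquation (q : ℝ) (f : ℝ → ℝ) : Prop :=
  ∀ x : ℝ, f (q * x) = 1 / (4 * q) * (f (x - 1) + f (x + 1) + 2 * f x)

theorem mul_div_one_sub_add_one {q : ℝ} (hq : q ≠ 1) : q * (q / (1 - q) + 1) = q / (1 - q) := by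
  have : 1 - q ≠ 0 := sub_ne_zero.mpr hq.symm
  field_simp
  ring

namespace SchillingEquation

variable {q : ℝ} {f : ℝ → ℝ}

theorem apply_zero (h : SchillingEquation q f) (hq : 0 < q) (hq2 : q ≠ 1 / 2)
    (hsupp : ∀ x, 1 ≤ |x| → f x = 0) : f 0 = 0 := by
  have h0 := h 0
  rw [mul_zero, hsupp (0 - 1) (by norm_num), hsupp (0 + 1) (by norm_num)] at h0
  have : f 0 * (2 * q - 1) = 0 := by
    field_simp at h0
    linarith
  refine (mul_eq_zero.mp this).resolve_right (sub_ne_zero.mpr ?_)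
  contrapose! hq2
  linarith

theorem apply_mul_add_one (h : SchillingEquation q f) (hsupp : ∀ x, 1 ≤ |x| → f x = 0)
    {u : ℝ} (hu : 0 ≤ u) : f (q * (u + 1)) = f u / (4 * q) := by
  rw [h, add_sub_cancel_right, hsupp (u + 1 + 1) (by rw [abs_of_pos (by linarith)]; linarith),
    hsupp (u + 1) (by rw [abs_of_pos (by linarith)]; linarith)]
  ring

theorem apply_eq_neg_two_mul_apply_add_one (h : SchillingEquation q f) (hq : 0 < q)
    (hsupp : ∀ x, 1 ≤ |x| → f x = 0) (h0 : ∀ x, 0 < x → x < q → f x = 0)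
    {t : ℝ} (ht1 : -1 < t) (ht0 : t < 0) : f t = -2 * f (t + 1) := by
  have ht := h (t + 1)
  rw [h0 _ (by nlinarith) (by nlinarith), add_sub_cancel_right,
    hsupp (t + 1 + 1) (by rw [abs_of_pos (by linarith)]; linarith)] at ht
  field_simp at ht
  linarith

theorem apply_eq_zero_of_pos_of_lt (h : SchillingEquation q f) (hq : 0 < q) (hq1 : q < 1)
    (hsupp : ∀ x, 1 ≤ |x| → f x = 0) (hbase : ∀ y, 0 < y → y ≤ q → f y = 0)
    {y : ℝ} (hy0 : 0 < y) (hyQ : y < q / (1 - q)) : f y = 0 := by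
  have hfix := mul_div_one_sub_add_one hq1.ne
  generalize q / (1 - q) = Q at hfix hyQ ⊢
  have hqQ : q < Q := by nlinarith
  have key : ∀ n : ℕ, ∀ z, 0 < z → (Q - q) * q ^ n ≤ Q - z → f z = 0 := by
    intro n
    induction n with
    | zero => exact fun z hz0 hz => hbase z hz0 (by linarith)
    | succ n ih =>
      intro z hz0 hz
      rcases le_or_gt z q with hzq | hzq
      · exact hbase z hz0 hzq
      set u := z / q - 1
      have hzu : z = q * (u + 1) := by simp only [u]; field_simp; ring
      have hu0 : 0 < u := by nlinarith
      have hu : (Q - q) * q ^ n ≤ Q - u := by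
        refine le_of_mul_le_mul_left ?_ hq
        calc q * ((Q - q) * q ^ n) = (Q - q) * q ^ (n + 1) := by ring
          _ ≤ Q - z := hz
          _ = q * (Q - u) := by rw [hzu]; linear_combination -hfix
      rw [hzu, h.apply_mul_add_one hsupp hu0.le, ih u hu0 hu, zero_div]
  obtain ⟨n, hn⟩ := exists_pow_lt_of_lt_one (div_pos (sub_pos.2 hyQ) (sub_pos.2 hqQ)) hq1
  rw [lt_div_iff₀ (sub_pos.2 hqQ)] at hn
  exact key n y hy0 (by linarith)

theorem apply_div_one_sub_eq_zero (h : SchillingEquation q f) (hq : 0 < q) (hq1 : q < 1 / 2)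
    (hsupp : ∀ x, 1 ≤ |x| → f x = 0) (h0 : ∀ x, 0 < x → x < q → f x = 0)
    (hoff : ∀ s, 0 < s → s ≠ q / (1 - q) → f s = 0) : f (q / (1 - q)) = 0 := by
  have hfix := mul_div_one_sub_add_one (show q ≠ 1 by linarith)
  generalize q / (1 - q) = Q at hfix hoff ⊢
  have hQ1 : Q < 1 := by nlinarith
  have hqQ : q < Q := by nlinarith
  have hQ_sub_one : f (Q - 1) = -2 * f Q := by
    simpa using h.apply_eq_neg_two_mul_apply_add_one hq hsupp h0 (t := Q - 1) (by linarith)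
      (by linarith)
  have hQ_sub_two := h (Q - 2)
  rw [show Q - 2 - 1 = Q - 3 by ring, show Q - 2 + 1 = Q - 1 by ring,
    hsupp (Q - 3) (by rw [abs_of_neg (by linarith)]; linarith),
    hsupp (Q - 2) (by rw [abs_of_neg (by linarith)]; linarith)] at hQ_sub_two
  have hrel := h.apply_eq_neg_two_mul_apply_add_one hq hsupp h0 (t := q * (Q - 2))
    (by nlinarith) (by nlinarith)
  rw [show q * (Q - 2) + 1 = Q + 1 - 3 * q by linarith] at hrel
  have hQ : f Q = 4 * q * f (Q + 1 - 3 * q) := by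
    have hinv : 4 * q * (1 / (4 * q)) = 1 := by field_simp
    rw [hQ_sub_one] at hQ_sub_two
    linear_combination (2 * q) * (hrel.symm.trans hQ_sub_two) - f Q * hinv
  -- for `q = 1 / 3` the point `Q + 1 - 3q` is `Q` itself, and `4q ≠ 1` concludes
  rcases eq_or_ne q (1 / 3) with rfl | hq3
  · rw [show Q + 1 - 3 * (1 / 3) = Q by ring] at hQ
    linear_combination -3 * hQ
  · rw [hQ, hoff _ (by linarith) (fun h' => hq3 (by linarith)), mul_zero]

end SchillingEquation

theorem schilling_vanish_pos_interval (q : ℝ) (hq : 0 < q) (hq1 : q < 1 / 2)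
    (f : ℝ → ℝ)
    (heq : ∀ x : ℝ, f (q * x) = 1 / (4 * q) * (f (x - 1) + f (x + 1) + 2 * f x))
    (hQ : ∀ x : ℝ, |x| > q / (1 - q) → f x = 0)
    (h0 : ∀ x : ℝ, 0 < x → x < q → f x = 0) :
    ∀ x : ℝ, f x = 0 := by
  have hS : SchillingEquation q f := heq
  have hQ1 : q / (1 - q) < 1 := by rw [div_lt_one (by linarith)]; linarith
  have hsupp : ∀ x, 1 ≤ |x| → f x = 0 := fun x hx => hQ x (by linarith)
  have hf0 : f 0 = 0 := hS.apply_zero hq hq1.ne hsupp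
  have hbase : ∀ y, 0 < y → y ≤ q → f y = 0 := by
    intro y hy0 hyq
    rcases hyq.lt_or_eq with hyq | rfl
    · exact h0 y hy0 hyq
    · simpa [hf0] using hS.apply_mul_add_one hsupp le_rfl
  have hoff : ∀ s, 0 < s → s ≠ q / (1 - q) → f s = 0 := by
    intro s hs hsQ
    rcases hsQ.lt_or_gt with hlt | hgt
    · exact hS.apply_eq_zero_of_pos_of_lt hq (by linarith) hsupp hbase hs hlt
    · exact hQ s (by rwa [abs_of_pos hs])
  have hnonneg : ∀ s, 0 ≤ s → f s = 0 := by
    intro s hs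
    rcases hs.eq_or_lt with rfl | hs
    · exact hf0
    rcases eq_or_ne s (q / (1 - q)) with rfl | hsQ
    · exact hS.apply_div_one_sub_eq_zero hq hq1 hsupp h0 hoff
    · exact hoff s hs hsQ
  intro x
  rcases le_or_gt 0 x with hx | hx
  · exact hnonneg x hx
  rcases le_or_gt x (-1) with hx1 | hx1
  · exact hsupp x (by rw [abs_of_neg hx]; linarith)
  · rw [hS.apply_eq_neg_two_mul_apply_add_one hq hsupp h0 hx1 hx, hnonneg (x + 1) (by linarith),
      mul_zero]
end

section
/- Let 0 < q < 1/2 and let f be a solution of Schilling's problem. If f vanishes on the interval (-q, 0), then f is identically zero. -/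
/-!
Writing `Q = q / (1 - q)`, the equation at `x = t / q` expresses `f t` through `f (t / q + 1)`
once `t ≤ -q`, the other two terms lying below `-1 < -Q`. The map `t ↦ t / q + 1` fixes `-Q` and
multiplies the distance to `-Q` by `1 / q > 1`, so the vanishing of `f` spreads from `(-q, 0]`
(where `f 0 = 0` because `q ≠ 1 / 2`) to `(-Q, 0]`. On `(0, 1)` the equation at `x = t - 1`
gives `f t = -2 f (t - 1)`, and using it at `t = 1 - Q` and `t = q (1 - Q)` together with the
equation at `x = 1 - Q` gives `f (-Q) = 0`.
-/

section Schilling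

variable {q : ℝ} {f : ℝ → ℝ}

lemma div_one_sub_lt_one (hq1 : q < 1 / 2) : q / (1 - q) < 1 := by
  rw [div_lt_one (by linarith)]
  linarith

lemma schilling_apply_zero (hq : 0 < q) (hq1 : q < 1 / 2)
    (heq : ∀ x : ℝ, f (q * x) = 1 / (4 * q) * (f (x - 1) + f (x + 1) + 2 * f x))
    (hm1 : f (-1) = 0) (h1 : f 1 = 0) : f 0 = 0 := by
  have h := heq 0
  rw [mul_zero, zero_sub, zero_add, hm1, h1] at h
  field_simp at h
  have h' : (4 * q - 2) * f 0 = 0 := by linear_combination h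
  exact (mul_eq_zero.mp h').resolve_left (by linarith)

lemma schilling_eq_zero_of_pow_mul_lt (hq : 0 < q) (hq1 : q < 1)
    (heq : ∀ x : ℝ, f (q * x) = 1 / (4 * q) * (f (x - 1) + f (x + 1) + 2 * f x))
    (hlow : ∀ x ≤ -1, f x = 0) (hbase : ∀ t, -q < t → t ≤ 0 → f t = 0) (n : ℕ) :
    ∀ t ≤ 0, q ^ (n + 1) * (q / (1 - q)) < t + q / (1 - q) → f t = 0 := by
  have h1q : 1 - q ≠ 0 := by linarith
  induction n with
  | zero =>
    intro t ht0 ht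
    refine hbase t ?_ ht0
    have : q * (q / (1 - q)) - q / (1 - q) = -q := by field_simp; ring
    linarith
  | succ n ih =>
    intro t ht0 ht
    rcases lt_or_ge (-q) t with hqt | htq
    · exact hbase t hqt ht0
    have hle : t / q ≤ -1 := by rw [div_le_iff₀ hq]; linarith
    have hshift : t / q + 1 + q / (1 - q) = (t + q / (1 - q)) / q := by field_simp; ring
    have hnext : f (t / q + 1) = 0 := by
      refine ih _ (by linarith) ?_
      rw [hshift, lt_div_iff₀ hq]
      linarith [show q ^ (n + 1) * (q / (1 - q)) * q = q ^ (n + 1 + 1) * (q / (1 - q)) by ring]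
    have h := heq (t / q)
    rw [mul_div_cancel₀ t hq.ne', hlow (t / q - 1) (by linarith), hlow _ hle, hnext] at h
    simpa using h

lemma schilling_eq_zero_of_neg_bound_lt (hq : 0 < q) (hq1 : q < 1)
    (heq : ∀ x : ℝ, f (q * x) = 1 / (4 * q) * (f (x - 1) + f (x + 1) + 2 * f x))
    (hlow : ∀ x ≤ -1, f x = 0) (hbase : ∀ t, -q < t → t ≤ 0 → f t = 0)
    {t : ℝ} (ht : -(q / (1 - q)) < t) (ht0 : t ≤ 0) : f t = 0 := by
  have hQ : 0 < q / (1 - q) := div_pos hq (by linarith)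
  obtain ⟨n, hn⟩ := exists_pow_lt_of_lt_one (div_pos (by linarith : 0 < t + q / (1 - q)) hQ) hq1
  refine schilling_eq_zero_of_pow_mul_lt hq hq1 heq hlow hbase n t ht0 ?_
  rw [lt_div_iff₀ hQ] at hn
  have : q ^ (n + 1) ≤ q ^ n := pow_le_pow_of_le_one hq.le hq1.le n.le_succ
  nlinarith

lemma schilling_apply_eq_neg_two_mul (hq : 0 < q)
    (heq : ∀ x : ℝ, f (q * x) = 1 / (4 * q) * (f (x - 1) + f (x + 1) + 2 * f x))
    (hlow : ∀ x ≤ -1, f x = 0) (h0 : ∀ x : ℝ, -q < x → x < 0 → f x = 0)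
    {t : ℝ} (ht0 : 0 < t) (ht1 : t < 1) : f t = -2 * f (t - 1) := by
  have h := heq (t - 1)
  rw [h0 _ (by nlinarith) (by nlinarith), hlow _ (by linarith), sub_add_cancel] at h
  field_simp at h
  linarith

lemma schilling_apply_neg_bound (hq : 0 < q) (hq1 : q < 1 / 2)
    (heq : ∀ x : ℝ, f (q * x) = 1 / (4 * q) * (f (x - 1) + f (x + 1) + 2 * f x))
    (hQ : ∀ x : ℝ, |x| > q / (1 - q) → f x = 0)
    (h0 : ∀ x : ℝ, -q < x → x < 0 → f x = 0) : f (-(q / (1 - q))) = 0 := by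
  set Q := q / (1 - q) with hQdef
  have hQ1 : Q < 1 := div_one_sub_lt_one hq1
  have hQpos : 0 < Q := div_pos hq (by linarith)
  have hlow : ∀ x ≤ -1, f x = 0 := fun x hx => hQ x (by rw [gt_iff_lt, lt_abs]; right; linarith)
  have hedge : f (1 - Q) = -2 * f (-Q) := by
    rw [schilling_apply_eq_neg_two_mul hq heq hlow h0 (by linarith) (by linarith),
      sub_sub_cancel_left]
  have hinner : f (q * (1 - Q)) = 0 := by
    have hlt : q * (1 - Q) - 1 < -Q := by
      have : q * (1 - Q) - 1 + Q = 2 * q - 1 := by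
        rw [hQdef]; field_simp [show 1 - q ≠ 0 by linarith]; ring
      linarith
    rw [schilling_apply_eq_neg_two_mul hq heq hlow h0 (by nlinarith) (by nlinarith),
      hQ _ (by rw [gt_iff_lt, lt_abs]; right; linarith), mul_zero]
  have h := heq (1 - Q)
  rw [hinner, sub_sub_cancel_left, hQ (1 - Q + 1) (by rw [gt_iff_lt, lt_abs]; left; linarith),
    hedge] at h
  field_simp at h
  linarith

end Schilling

theorem schilling_vanish_neg_interval (q : ℝ) (hq : 0 < q) (hq1 : q < 1 / 2)
    (f : ℝ → ℝ)
    (heq : ∀ x : ℝ, f (q * x) = 1 / (4 * q) * (f (x - 1) + f (x + 1) + 2 * f x))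
    (hQ : ∀ x : ℝ, |x| > q / (1 - q) → f x = 0)
    (h0 : ∀ x : ℝ, -q < x → x < 0 → f x = 0) :
    ∀ x : ℝ, f x = 0 := by
  have hQ1 : q / (1 - q) < 1 := div_one_sub_lt_one hq1
  have hout : ∀ x, x < -(q / (1 - q)) ∨ q / (1 - q) < x → f x = 0 := fun x hx =>
    hQ x (by rcases hx with hx | hx <;> rw [gt_iff_lt, lt_abs] <;> [right; left] <;> linarith)
  have hlow : ∀ x ≤ -1, f x = 0 := fun x hx => hout x (.inl (by linarith))
  have hbase : ∀ t, -q < t → t ≤ 0 → f t = 0 := fun t ht ht0 =>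
    ht0.lt_or_eq.elim (h0 t ht) fun h => h ▸
      schilling_apply_zero hq hq1 heq (hlow _ le_rfl) (hout 1 (.inr hQ1))
  have hnonpos : ∀ t, -(q / (1 - q)) ≤ t → t ≤ 0 → f t = 0 := fun t ht ht0 =>
    ht.lt_or_eq.elim (schilling_eq_zero_of_neg_bound_lt hq (by linarith) heq hlow hbase · ht0)
      fun h => h ▸ schilling_apply_neg_bound hq hq1 heq hQ h0
  intro x
  rcases lt_or_ge x (-(q / (1 - q))) with hx | hx
  · exact hout x (.inl hx)
  rcases le_or_gt x 0 with hx0 | hx0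
  · exact hnonpos x hx hx0
  rcases le_or_gt 1 x with hx1 | hx1
  · exact hout x (.inr (by linarith))
  rw [schilling_apply_eq_neg_two_mul hq heq hlow h0 hx0 hx1]
  rcases lt_or_ge (x - 1) (-(q / (1 - q))) with h | h
  · rw [hout _ (.inl h), mul_zero]
  · rw [hnonpos _ h (by linarith), mul_zero]
end

section
/- Let 0 < q < 1/2 and let f be a solution of Schilling's problem. Then for every x ∈ (Q-1, 1-Q) and every nonnegative integer m, f(qᵐ·x) = (1/(2q))ᵐ · f(x). -/
/-!
Near the origin the two shifted terms of Schilling's equation vanish: if `|y| < 1 - Q` then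
`|y ± 1| > Q`, so the equation collapses to `f (q * y) = f y / (2 * q)`. Multiplication by `q`
maps the interval `|y| < 1 - Q` into itself, so this relation can be iterated.
-/

open Set Metric

theorem apply_pow_mul_of_mapsTo {M R : Type*} [Monoid M] [Monoid R] {f : M → R} {q : M} {c : R}
    {s : Set M} (hs : MapsTo (q * ·) s s) (hf : ∀ y ∈ s, f (q * y) = c * f y) :
    ∀ m : ℕ, ∀ x ∈ s, f (q ^ m * x) = c ^ m * f x := by
  intro m
  induction m with
  | zero => simp
  | succ n ih =>
    intro x hx
    rw [pow_succ, mul_assoc, ih (q * x) (hs hx), hf x hx, ← mul_assoc, ← pow_succ]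

theorem apply_sub_one_and_apply_add_one_eq_zero {f : ℝ → ℝ} {Q y : ℝ} (hQ : ∀ x : ℝ, |x| > Q → f x = 0)
    (hy : y ∈ ball (0 : ℝ) (1 - Q)) : f (y - 1) = 0 ∧ f (y + 1) = 0 := by
  rw [Real.ball_eq_Ioo, mem_Ioo] at hy
  refine ⟨hQ _ ?_, hQ _ ?_⟩
  · rw [abs_sub_comm]
    exact lt_abs.mpr (Or.inl (by linarith))
  · exact lt_abs.mpr (Or.inl (by linarith))

theorem schilling_apply_mul_of_mem_ball {f : ℝ → ℝ} {q Q y : ℝ}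
    (heq : ∀ x : ℝ, f (q * x) = 1 / (4 * q) * (f (x - 1) + f (x + 1) + 2 * f x))
    (hQ : ∀ x : ℝ, |x| > Q → f x = 0) (hy : y ∈ ball (0 : ℝ) (1 - Q)) :
    f (q * y) = 1 / (2 * q) * f y := by
  obtain ⟨hminus, hplus⟩ := apply_sub_one_and_apply_add_one_eq_zero hQ hy
  rw [heq, hminus, hplus]
  ring

theorem schilling_scaling (q : ℝ) (hq : 0 < q) (hq1 : q < 1 / 2)
    (f : ℝ → ℝ)
    (heq : ∀ x : ℝ, f (q * x) = 1 / (4 * q) * (f (x - 1) + f (x + 1) + 2 * f x))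
    (hQ : ∀ x : ℝ, |x| > q / (1 - q) → f x = 0) :
    ∀ x : ℝ, q / (1 - q) - 1 < x → x < 1 - q / (1 - q) →
      ∀ m : ℕ, f (q ^ m * x) = (1 / (2 * q)) ^ m * f x := by
  intro x hx1 hx2 m
  have hx : x ∈ ball (0 : ℝ) (1 - q / (1 - q)) := by
    rw [Real.ball_eq_Ioo, mem_Ioo]
    constructor <;> linarith
  have hmaps : MapsTo (q * ·) (ball (0 : ℝ) (1 - q / (1 - q))) (ball 0 (1 - q / (1 - q))) :=
    fun y hy => balanced_ball_zero.smul_mem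
      (by rw [Real.norm_eq_abs, abs_of_pos hq]; linarith) hy
  exact apply_pow_mul_of_mapsTo hmaps
    (fun y hy => schilling_apply_mul_of_mem_ball heq hQ hy) m x hx
end

section
/- Let 0 < q < 1/2 and let f be a solution of Schilling's problem. Then for every x ∈ (Q-1, 1-Q), every ε ∈ {-1, 1}, and all nonnegative integers m and n, f(q^{m+n}·x + ε·∑_{i=1}^{n} qⁱ) = (1/2)ⁿ · (1/(2q))^{m+n} · f(x). -/
/-!
Write `Q = q / (1 - q)`. On `|y| < 1 - Q` both neighbours `y ± 1` lie outside `[-Q, Q]`, so the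
functional equation collapses to `f (q * y) = f y / (2 * q)`, which iterates to the case `n = 0`.
The partial sums `Sₙ = ∑_{i=1}^n qⁱ` are nonnegative and satisfy `Sₙ₊₁ = q * (1 + Sₙ)`, so the
point `q^(m+n+1) x + ε Sₙ₊₁` is `q * w` with `w = q^(m+n) x + ε (1 + Sₙ)`. Since `ε w > Q`, of
the three values of `f` in the equation at `w` only the one at `w - ε = q^(m+n) x + ε Sₙ`
survives, giving the extra factor `1 / (4 * q)` per step.
-/

open Finset

theorem sum_Icc_one_pow_succ {R : Type*} [CommRing R] (q : R) (n : ℕ) :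
    ∑ i ∈ Icc 1 (n + 1), q ^ i = q * (1 + ∑ i ∈ Icc 1 n, q ^ i) := by
  induction n with
  | zero => simp
  | succ n ih =>
    have hlast : ∑ i ∈ Icc 1 (n + 1), q ^ i = ∑ i ∈ Icc 1 n, q ^ i + q ^ (n + 1) :=
      sum_Icc_succ_top (by omega) _
    rw [sum_Icc_succ_top (by omega)]
    linear_combination ih - q * hlast

theorem abs_pow_mul_le_abs {q : ℝ} (hq : 0 ≤ q) (hq1 : q ≤ 1) (k : ℕ) (y : ℝ) :
    |q ^ k * y| ≤ |y| := by
  rw [abs_mul, abs_of_nonneg (pow_nonneg hq k)]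
  exact mul_le_of_le_one_left (abs_nonneg y) (pow_le_one₀ hq hq1)

section SchillingEquation

variable {q : ℝ} {f : ℝ → ℝ}
  (heq : ∀ x : ℝ, f (q * x) = 1 / (4 * q) * (f (x - 1) + f (x + 1) + 2 * f x))
  (hQ : ∀ x : ℝ, |x| > q / (1 - q) → f x = 0)
include heq hQ

theorem apply_mul_eq_of_abs_lt {y : ℝ} (hy : |y| < 1 - q / (1 - q)) :
    f (q * y) = 1 / (2 * q) * f y := by
  obtain ⟨hy₁, hy₂⟩ := abs_lt.mp hy
  have hleft : f (y - 1) = 0 := hQ _ (lt_abs.mpr (Or.inr (by linarith)))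
  have hright : f (y + 1) = 0 := hQ _ (lt_abs.mpr (Or.inl (by linarith)))
  rw [heq, hleft, hright]
  ring

theorem apply_pow_mul_eq_of_abs_lt (hq : 0 ≤ q) (hq1 : q ≤ 1) {y : ℝ}
    (hy : |y| < 1 - q / (1 - q)) (k : ℕ) :
    f (q ^ k * y) = (1 / (2 * q)) ^ k * f y := by
  induction k with
  | zero => simp
  | succ k ih =>
    have hk : |q ^ k * y| < 1 - q / (1 - q) := (abs_pow_mul_le_abs hq hq1 k y).trans_lt hy
    rw [pow_succ', mul_assoc, apply_mul_eq_of_abs_lt heq hQ hk, ih]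
    ring

theorem apply_mul_shift_eq {ε : ℝ} (hε : ε = -1 ∨ ε = 1) {y S : ℝ}
    (hy : |y| < 1 - q / (1 - q)) (hS : 0 ≤ S) :
    f (q * (y + ε * (1 + S))) = 1 / (4 * q) * f (y + ε * S) := by
  obtain ⟨hy₁, hy₂⟩ := abs_lt.mp hy
  rcases hε with rfl | rfl
  · have hw : f (y + -1 * (1 + S)) = 0 := hQ _ (lt_abs.mpr (Or.inr (by linarith)))
    have hw' : f (y + -1 * (1 + S) - 1) = 0 := hQ _ (lt_abs.mpr (Or.inr (by linarith)))
    rw [heq, hw, hw', show y + -1 * (1 + S) + 1 = y + -1 * S by ring]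
    ring
  · have hw : f (y + 1 * (1 + S)) = 0 := hQ _ (lt_abs.mpr (Or.inl (by linarith)))
    have hw' : f (y + 1 * (1 + S) + 1) = 0 := hQ _ (lt_abs.mpr (Or.inl (by linarith)))
    rw [heq, hw, hw', show y + 1 * (1 + S) - 1 = y + 1 * S by ring]
    ring

end SchillingEquation

theorem schilling_lemma2 (q : ℝ) (hq : 0 < q) (hq1 : q < 1 / 2)
    (f : ℝ → ℝ)
    (heq : ∀ x : ℝ, f (q * x) = 1 / (4 * q) * (f (x - 1) + f (x + 1) + 2 * f x))
    (hQ : ∀ x : ℝ, |x| > q / (1 - q) → f x = 0) :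
    ∀ x : ℝ, q / (1 - q) - 1 < x → x < 1 - q / (1 - q) →
      ∀ ε : ℝ, (ε = -1 ∨ ε = 1) → ∀ m n : ℕ,
        f (q ^ (m + n) * x + ε * ∑ i ∈ Finset.Icc 1 n, q ^ i)
          = (1 / 2) ^ n * (1 / (2 * q)) ^ (m + n) * f x := by
  intro x hx₁ hx₂ ε hε m n
  have hx : |x| < 1 - q / (1 - q) := abs_lt.mpr ⟨by linarith, hx₂⟩
  induction n with
  | zero => simpa using apply_pow_mul_eq_of_abs_lt heq hQ hq.le (by linarith) hx m
  | succ n ih =>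
    have hy : |q ^ (m + n) * x| < 1 - q / (1 - q) :=
      (abs_pow_mul_le_abs hq.le (by linarith) _ x).trans_lt hx
    have hS : 0 ≤ ∑ i ∈ Icc 1 n, q ^ i := sum_nonneg fun i _ => pow_nonneg hq.le i
    have harg : q ^ (m + (n + 1)) * x + ε * ∑ i ∈ Icc 1 (n + 1), q ^ i
        = q * (q ^ (m + n) * x + ε * (1 + ∑ i ∈ Icc 1 n, q ^ i)) := by
      rw [sum_Icc_one_pow_succ]
      ring
    rw [harg, apply_mul_shift_eq heq hQ hε hy hS, ih]
    ring
end

section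
/- Let 0 < q < 1/2 and let f be a solution of Schilling's problem such that f(x) = 0 for all |x| ≤ 1 - Q. Then f(x) = 0 for all x with q·Q ≤ |x| ≤ q·(2-Q), where Q = q/(1-q). -/
/-!
Write `Q = q / (1 - q)`. For `x` in the range of the theorem put `y = x / q`, so that
`Q ≤ |y| ≤ 2 - Q` and `f x = (f (y - 1) + f (y + 1) + 2 f y) / (4 q)`. Here `f y = 0` since `|y| ≥ Q`,
the neighbour of `y` away from the origin lies beyond `Q`, and the one towards the origin lies in
`[-(1 - Q), 1 - Q]`, where `f` vanishes by assumption.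
-/

structure IsSchillingSolution (q : ℝ) (f : ℝ → ℝ) : Prop where
  functional_eq : ∀ x : ℝ, f (q * x) = 1 / (4 * q) * (f (x - 1) + f (x + 1) + 2 * f x)
  eq_zero_of_lt_abs : ∀ x : ℝ, q / (1 - q) < |x| → f x = 0

namespace IsSchillingSolution

variable {q : ℝ} {f : ℝ → ℝ}

theorem comp_neg (hf : IsSchillingSolution q f) : IsSchillingSolution q (fun x ↦ f (-x)) where
  functional_eq x := by
    rw [← mul_neg, hf.functional_eq, neg_sub', neg_add', sub_neg_eq_add, add_comm (f (-x - 1))]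
  eq_zero_of_lt_abs x hx := hf.eq_zero_of_lt_abs (-x) (by rwa [abs_neg])

/-- Only the boundary point `Q` is new: the equation at `1 / (1 - q)` reads `f Q = f Q / (4 q)`. -/
theorem apply_eq_zero_of_le (hf : IsSchillingSolution q f) (hq0 : 0 < q) (hq1 : q < 1)
    (hq4 : 4 * q ≠ 1) {y : ℝ} (hy : q / (1 - q) ≤ y) : f y = 0 := by
  obtain hlt | rfl := hy.lt_or_eq
  · exact hf.eq_zero_of_lt_abs y (hlt.trans_le (le_abs_self y))
  have h1q : 0 < 1 - q := sub_pos.2 hq1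
  have hlt : q / (1 - q) < 1 / (1 - q) := div_lt_div_of_pos_right hq1 h1q
  have hzero : ∀ z, 1 / (1 - q) ≤ z → f z = 0 := fun z hz ↦
    hf.eq_zero_of_lt_abs z (hlt.trans_le (hz.trans (le_abs_self z)))
  have key := hf.functional_eq (1 / (1 - q))
  rw [hzero _ le_rfl, hzero _ (le_add_of_nonneg_right zero_le_one),
    show q * (1 / (1 - q)) = q / (1 - q) by ring,
    show 1 / (1 - q) - 1 = q / (1 - q) by field_simp; ring] at key
  have hmul : f (q / (1 - q)) * (4 * q - 1) = 0 := by
    field_simp at key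
    linarith
  exact (mul_eq_zero.1 hmul).resolve_right (sub_ne_zero.2 hq4)

theorem apply_eq_zero_of_le_abs (hf : IsSchillingSolution q f) (hq0 : 0 < q) (hq1 : q < 1)
    (hq4 : 4 * q ≠ 1) {y : ℝ} (hy : q / (1 - q) ≤ |y|) : f y = 0 := by
  rcases le_total 0 y with hy0 | hy0
  · exact hf.apply_eq_zero_of_le hq0 hq1 hq4 (by rwa [abs_of_nonneg hy0] at hy)
  · simpa using hf.comp_neg.apply_eq_zero_of_le hq0 hq1 hq4 (y := -y) (by rwa [abs_of_nonpos hy0] at hy)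

theorem apply_eq_zero_of_mul_le (hf : IsSchillingSolution q f) (hq0 : 0 < q) (hq1 : q < 1)
    (hq4 : 4 * q ≠ 1) (h0 : ∀ x : ℝ, |x| ≤ 1 - q / (1 - q) → f x = 0) {x : ℝ}
    (hx : q * (q / (1 - q)) ≤ x) (hx' : x ≤ q * (2 - q / (1 - q))) : f x = 0 := by
  set Q := q / (1 - q)
  have hQ : 0 < Q := div_pos hq0 (sub_pos.2 hq1)
  have hlo : Q ≤ x / q := (le_div_iff₀ hq0).2 (by linarith)
  have hhi : x / q ≤ 2 - Q := (div_le_iff₀ hq0).2 (by linarith)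
  have hcenter : f (x / q) = 0 := hf.apply_eq_zero_of_le hq0 hq1 hq4 hlo
  have hout : f (x / q + 1) = 0 :=
    hf.eq_zero_of_lt_abs _ (by rw [abs_of_pos (by linarith)]; linarith)
  have hin : f (x / q - 1) = 0 := h0 _ (abs_le.2 ⟨by linarith, by linarith⟩)
  have key := hf.functional_eq (x / q)
  rwa [mul_div_cancel₀ x hq0.ne', hcenter, hout, hin, add_zero, zero_add, mul_zero,
    mul_zero] at key

theorem apply_eq_zero_of_mul_le_abs (hf : IsSchillingSolution q f) (hq0 : 0 < q) (hq1 : q < 1)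
    (hq4 : 4 * q ≠ 1) (h0 : ∀ x : ℝ, |x| ≤ 1 - q / (1 - q) → f x = 0) {x : ℝ}
    (hx : q * (q / (1 - q)) ≤ |x|) (hx' : |x| ≤ q * (2 - q / (1 - q))) : f x = 0 := by
  rcases le_total 0 x with hx0 | hx0
  · rw [abs_of_nonneg hx0] at hx hx'
    exact hf.apply_eq_zero_of_mul_le hq0 hq1 hq4 h0 hx hx'
  · rw [abs_of_nonpos hx0] at hx hx'
    simpa using hf.comp_neg.apply_eq_zero_of_mul_le hq0 hq1 hq4
      (fun z hz ↦ h0 (-z) (by rwa [abs_neg])) hx hx'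

end IsSchillingSolution

theorem one_fourth_lt_three_sub_sqrt_five_div_two : (1 : ℝ) / 4 < (3 - Real.sqrt 5) / 2 := by
  have : Real.sqrt 5 < 5 / 2 := (Real.sqrt_lt' (by norm_num)).2 (by norm_num)
  linarith

theorem one_sub_cbrt_two_add_cbrt_four_div_three_lt_one :
    (1 - (2 : ℝ) ^ ((1 : ℝ) / 3) + (4 : ℝ) ^ ((1 : ℝ) / 3)) / 3 < 1 := by
  have h4 : (4 : ℝ) ^ ((1 : ℝ) / 3) < 2 := calc
    (4 : ℝ) ^ ((1 : ℝ) / 3) < 4 ^ ((1 : ℝ) / 2) :=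
      Real.rpow_lt_rpow_of_exponent_lt (by norm_num) (by norm_num)
    _ = 2 := by rw [← Real.sqrt_eq_rpow, show (4 : ℝ) = 2 ^ 2 by norm_num, Real.sqrt_sq zero_le_two]
  have h2 : 0 < (2 : ℝ) ^ ((1 : ℝ) / 3) := by positivity
  linarith

theorem schilling_step10 (q : ℝ) (hq : (3 - Real.sqrt 5) / 2 < q)
    (hq1 : q ≤ (1 - (2 : ℝ) ^ ((1 : ℝ) / 3) + (4 : ℝ) ^ ((1 : ℝ) / 3)) / 3)
    (f : ℝ → ℝ)
    (heq : ∀ x : ℝ, f (q * x) = 1 / (4 * q) * (f (x - 1) + f (x + 1) + 2 * f x))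
    (hQ : ∀ x : ℝ, |x| > q / (1 - q) → f x = 0)
    (h0 : ∀ x : ℝ, |x| ≤ 1 - q / (1 - q) → f x = 0) :
    ∀ x : ℝ, q * (q / (1 - q)) ≤ |x| → |x| ≤ q * (2 - q / (1 - q)) → f x = 0 := by
  have hq_gt : 1 / 4 < q := one_fourth_lt_three_sub_sqrt_five_div_two.trans hq
  have hq_lt : q < 1 := hq1.trans_lt one_sub_cbrt_two_add_cbrt_four_div_three_lt_one
  intro x hx hx'
  exact IsSchillingSolution.apply_eq_zero_of_mul_le_abs ⟨heq, hQ⟩ (by linarith) hq_lt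
    (by linarith) h0 hx hx'
end

section
/- Let (3-√5)/2 < q ≤ (1 - 2^{1/3} + 4^{1/3})/3, Q = q/(1-q), and let f be a solution of Schilling's problem vanishing on [-(1-Q), 1-Q] and on {x : q·Q ≤ |x| ≤ q·(2-Q)}. Then f(x) = 0 for all x with q - q²·(2-Q) ≤ |x| ≤ q²·(2-Q). -/
theorem schilling_step11 (q : ℝ) (hq : (3 - Real.sqrt 5) / 2 < q)
    (hq1 : q ≤ (1 - (2 : ℝ) ^ ((1 : ℝ) / 3) + (4 : ℝ) ^ ((1 : ℝ) / 3)) / 3)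
    (f : ℝ → ℝ)
    (heq : ∀ x : ℝ, f (q * x) = 1 / (4 * q) * (f (x - 1) + f (x + 1) + 2 * f x))
    (hQ : ∀ x : ℝ, |x| > q / (1 - q) → f x = 0)
    (h0 : ∀ x : ℝ, |x| ≤ 1 - q / (1 - q) → f x = 0)
    (h1 : ∀ x : ℝ, q * (q / (1 - q)) ≤ |x| → |x| ≤ q * (2 - q / (1 - q)) → f x = 0) :
    ∀ x : ℝ, q - q ^ 2 * (2 - q / (1 - q)) ≤ |x| → |x| ≤ q ^ 2 * (2 - q / (1 - q)) →
      f x = 0 := by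
  -- basic bounds on q
  have hs5 : Real.sqrt 5 < 3 := by
    nlinarith [Real.sq_sqrt (by norm_num : (5:ℝ) ≥ 0), Real.sqrt_nonneg 5]
  have hq0 : 0 < q := by nlinarith
  set a : ℝ := (2 : ℝ) ^ ((1 : ℝ) / 3) with ha_def
  set b : ℝ := (4 : ℝ) ^ ((1 : ℝ) / 3) with hb_def
  have ha0 : 0 ≤ a := Real.rpow_nonneg (by norm_num) _
  have hb0 : 0 ≤ b := Real.rpow_nonneg (by norm_num) _
  have ha3 : a ^ (3 : ℕ) = 2 := by
    rw [ha_def, ← Real.rpow_natCast ((2:ℝ) ^ ((1:ℝ)/3)) 3,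
      ← Real.rpow_mul (by norm_num : (0:ℝ) ≤ 2)]
    norm_num
  have hb3 : b ^ (3 : ℕ) = 4 := by
    rw [hb_def, ← Real.rpow_natCast ((4:ℝ) ^ ((1:ℝ)/3)) 3,
      ← Real.rpow_mul (by norm_num : (0:ℝ) ≤ 4)]
    norm_num
  have ha_gt : (1.25 : ℝ) < a := by nlinarith [sq_nonneg (a - 1.25), sq_nonneg (a + 1.25)]
  have hb_lt : b < 1.59 := by nlinarith [sq_nonneg (b - 1.59), sq_nonneg (b + 1.59)]
  have hqh : q < 1 / 2 := by
    have : (1 - a + b) / 3 < 1 / 2 := by nlinarith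
    linarith
  have h1q : 0 < 1 - q := by linarith
  set Qv : ℝ := q / (1 - q) with hQv
  have hQvq : Qv * (1 - q) = q := div_mul_cancel₀ q (ne_of_gt h1q)
  have hQpos : 0 < Qv := div_pos hq0 h1q
  have hqQpos : 0 < q * Qv := mul_pos hq0 hQpos
  -- key interval facts
  have hA : q * Qv ≤ 1 - q * (2 - Qv) := by nlinarith
  have hB : q * (2 - Qv) < 1 := by nlinarith
  have hD : 0 < 1 - q * (2 - Qv) := by nlinarith
  have hC : Qv < 2 - q * (2 - Qv) := by nlinarith
  intro x hx1 hx2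
  set y : ℝ := x / q with hy_def
  have hxy : q * y = x := by rw [hy_def]; exact mul_div_cancel₀ x hq0.ne'
  have habs : |x| = q * |y| := by
    rw [← hxy, abs_mul, abs_of_pos hq0]
  have hyl : 1 - q * (2 - Qv) ≤ |y| := by
    rw [habs] at hx1
    have h' : q * (1 - q * (2 - Qv)) ≤ q * |y| := by linarith
    exact le_of_mul_le_mul_left h' hq0
  have hyu : |y| ≤ q * (2 - Qv) := by
    rw [habs] at hx2
    have h' : q * |y| ≤ q * (q * (2 - Qv)) := by linarith
    exact le_of_mul_le_mul_left h' hq0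
  have hy0 : f y = 0 := h1 y (by linarith) hyu
  have hyne : y ≠ 0 := by
    intro h; rw [h, abs_zero] at hyl; linarith
  have hfp : f (y - 1) = 0 ∧ f (y + 1) = 0 := by
    rcases lt_or_gt_of_ne hyne with hneg | hpos
    · -- y < 0 : |y| = -y
      have hay : |y| = -y := abs_of_neg hneg
      rw [hay] at hyl hyu
      have e1 : |y - 1| = 1 - y := by
        rw [abs_of_neg (by linarith : y - 1 < 0)]; ring
      have e2 : |y + 1| = 1 + y := by
        rw [abs_of_pos (by linarith : (0:ℝ) < y + 1)]; ring
      exact ⟨hQ _ (by rw [e1]; linarith), h1 _ (by rw [e2]; linarith) (by rw [e2]; linarith)⟩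
    · -- y > 0 : |y| = y
      have hay : |y| = y := abs_of_pos hpos
      rw [hay] at hyl hyu
      have e1 : |y - 1| = 1 - y := by
        rw [abs_of_neg (by linarith : y - 1 < 0)]; ring
      have e2 : |y + 1| = 1 + y := by
        rw [abs_of_pos (by linarith : (0:ℝ) < y + 1)]; ring
      exact ⟨h1 _ (by rw [e1]; linarith) (by rw [e1]; linarith), hQ _ (by rw [e2]; linarith)⟩
  rw [← hxy, heq y, hy0, hfp.1, hfp.2]
  ring
end

section
/- Let (3-√5)/2 < q ≤ (1 - 2^{1/3} + 4^{1/3})/3, Q = q/(1-q), and let f be a solution of Schilling's problem vanishing on {x : |x| ≤ q²·(2-Q)} and on {x : q·Q ≤ |x| ≤ q·(2-Q)}. Then f(x) = 0 for all x ∈ [1 - q·(2-Q), 1 - q·Q]. -/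
theorem schilling_step15 (q : ℝ) (hq : (3 - Real.sqrt 5) / 2 < q)
    (hq1 : q ≤ (1 - (2 : ℝ) ^ ((1 : ℝ) / 3) + (4 : ℝ) ^ ((1 : ℝ) / 3)) / 3)
    (f : ℝ → ℝ)
    (heq : ∀ x : ℝ, f (q * x) = 1 / (4 * q) * (f (x - 1) + f (x + 1) + 2 * f x))
    (hQ : ∀ x : ℝ, |x| > q / (1 - q) → f x = 0)
    (h0 : ∀ x : ℝ, |x| ≤ q ^ 2 * (2 - q / (1 - q)) → f x = 0)
    (h1 : ∀ x : ℝ, q * (q / (1 - q)) ≤ |x| → |x| ≤ q * (2 - q / (1 - q)) → f x = 0) :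
    ∀ x : ℝ, 1 - q * (2 - q / (1 - q)) ≤ x → x ≤ 1 - q * (q / (1 - q)) → f x = 0 := by
  have h5 : Real.sqrt 5 < 3 := by
    nlinarith [Real.sq_sqrt (by norm_num : (5:ℝ) ≥ 0), Real.sqrt_nonneg 5]
  have hq0 : 0 < q := by nlinarith
  have h2r : (1:ℝ) ≤ (2:ℝ) ^ ((1:ℝ)/3) := Real.one_le_rpow (by norm_num) (by norm_num)
  have h8 : (8:ℝ) ^ ((1:ℝ)/3) = 2 := by
    rw [show (8:ℝ) = 2 ^ (3:ℕ) by norm_num, ← Real.rpow_natCast 2 3,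
      ← Real.rpow_mul (by norm_num)]
    norm_num
  have h4r : (4:ℝ) ^ ((1:ℝ)/3) < 2 := by
    have := Real.rpow_lt_rpow (by norm_num : (0:ℝ) ≤ 4) (by norm_num : (4:ℝ) < 8)
      (by norm_num : (0:ℝ) < 1/3)
    linarith [h8 ▸ this]
  have hq2 : q < 1 := by nlinarith
  have h1q : 0 < 1 - q := by linarith
  set Q : ℝ := q / (1 - q) with hQdef
  have hQpos : 0 < Q := div_pos hq0 h1q
  have hQq : Q * (1 - q) = q := div_mul_cancel₀ _ (ne_of_gt h1q)
  intro x hx1 hx2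
  have hxle : x ≤ 1 := by nlinarith [mul_pos hq0 hQpos]
  have hf1 : f (x - 1) = 0 := by
    apply h1
    · rw [abs_of_nonpos (by linarith)]; linarith
    · rw [abs_of_nonpos (by linarith)]; linarith
  have hf2 : f (x - 1 - 1) = 0 := by
    apply hQ
    rw [abs_of_nonpos (by linarith)]
    nlinarith [mul_pos hq0 hQpos]
  have hql : f (q * (x - 1)) = 0 := by
    apply h0
    rw [abs_mul, abs_of_pos hq0, abs_of_nonpos (by linarith)]
    nlinarith
  have hkey := heq (x - 1)
  rw [show x - 1 + 1 = x by ring, hql, hf2, hf1] at hkey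
  have h4q : 0 < 1 / (4 * q) := by positivity
  nlinarith [hkey]
end

section
/- If 0 < q ≤ √2 - 1 and f is a solution of Schilling's problem bounded in a neighbourhood of 0, then f is identically zero. -/
set_option maxHeartbeats 1000000

theorem baron_theorem (q : ℝ) (hq : 0 < q) (hq1 : q ≤ Real.sqrt 2 - 1)
    (f : ℝ → ℝ)
    (heq : ∀ x : ℝ, f (q * x) = 1 / (4 * q) * (f (x - 1) + f (x + 1) + 2 * f x))
    (hQ : ∀ x : ℝ, |x| > q / (1 - q) → f x = 0)
    (hbdd : ∃ δ > 0, ∃ M : ℝ, ∀ x : ℝ, |x| < δ → |f x| ≤ M) :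
    ∀ x : ℝ, f x = 0 := by
  have hs2 : (Real.sqrt 2) ^ 2 = 2 := Real.sq_sqrt (by norm_num)
  have hs2n : 0 ≤ Real.sqrt 2 := Real.sqrt_nonneg 2
  have hq2 : q < 1/2 := by nlinarith
  set Q := q / (1 - q) with hQdef
  clear_value Q
  have h1q : (0:ℝ) < 1 - q := by linarith
  have hQpos : 0 < Q := by rw [hQdef]; exact div_pos hq h1q
  have hQ1 : Q < 1 := by
    rw [hQdef, div_lt_one h1q]; linarith
  have hP : (0:ℝ) < 1 - Q := by linarith
  have hqQ : q * Q ≤ 1 - Q := by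
    have key : q^2 + 2*q - 1 ≤ 0 := by nlinarith
    rw [hQdef, show (1:ℝ) - q/(1-q) = (1-2*q)/(1-q) by field_simp; ring,
      show q * (q/(1-q)) = q^2/(1-q) by ring]
    rw [div_le_div_iff_of_pos_right h1q]
    linarith
  -- rearranged functional equation
  have heq' : ∀ x : ℝ, 2 * f x = 4*q*f (q*x) - f (x-1) - f (x+1) := by
    intro x
    have h := heq x
    have h4 : (4*q) ≠ 0 := by positivity
    field_simp at h
    linarith
  -- middle region
  have hmid : ∀ x : ℝ, |x| < 1 - Q → f x = 2*q*f (q*x) := by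
    intro x hx
    obtain ⟨hxl, hxr⟩ := abs_lt.mp hx
    have h1 : f (x-1) = 0 := by
      apply hQ
      have : (1:ℝ) - x ≤ |x - 1| := by
        rw [abs_sub_comm]; exact le_abs_self _
      linarith
    have h2 : f (x+1) = 0 := by
      apply hQ
      have : x + 1 ≤ |x + 1| := le_abs_self _
      linarith
    have := heq' x
    linarith
  -- iteration
  have hiter : ∀ n : ℕ, ∀ x : ℝ, |x| < 1 - Q → f x = (2*q)^n * f (q^n * x) := by
    intro n
    induction n with
    | zero => intro x _; simp
    | succ n ih =>
      intro x hx
      have hqx : |q * x| < 1 - Q := by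
        rw [abs_mul, abs_of_pos hq]
        calc q * |x| ≤ 1 * |x| := by
              apply mul_le_mul_of_nonneg_right _ (abs_nonneg x); linarith
          _ = |x| := one_mul _
          _ < 1 - Q := hx
      rw [hmid x hx, ih (q*x) hqx, show q^n * (q*x) = q^(n+1)*x by ring]
      ring
  -- f = 0 on open middle ball
  have hzero_mid : ∀ x : ℝ, |x| < 1 - Q → f x = 0 := by
    obtain ⟨δ, hδ, M, hM⟩ := hbdd
    intro x hx
    have h2q : |2*q| < 1 := by
      rw [abs_of_pos (by linarith : (0:ℝ) < 2*q)]; linarith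
    have hlim : Filter.Tendsto (fun n : ℕ => (2*q)^n * M) Filter.atTop (nhds 0) := by
      have := (tendsto_pow_atTop_nhds_zero_of_abs_lt_one h2q).mul_const M
      simpa using this
    have hqabs : |q| < 1 := by rw [abs_of_pos hq]; linarith
    have hlim2 : Filter.Tendsto (fun n : ℕ => q^n * |x|) Filter.atTop (nhds 0) := by
      have := (tendsto_pow_atTop_nhds_zero_of_abs_lt_one hqabs).mul_const |x|
      simpa using this
    have hev : ∀ᶠ n : ℕ in Filter.atTop, |f x| ≤ (2*q)^n * M := by
      filter_upwards [hlim2.eventually_lt_const hδ] with n hn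
      have hfx : |f (q^n * x)| ≤ M := by
        apply hM
        rw [abs_mul, abs_pow, abs_of_pos hq]
        exact hn
      calc |f x| = |(2*q)^n * f (q^n * x)| := by rw [hiter n x hx]
        _ = (2*q)^n * |f (q^n * x)| := by
            rw [abs_mul, abs_pow, abs_of_pos (by linarith : (0:ℝ) < 2*q)]
        _ ≤ (2*q)^n * M := by
            apply mul_le_mul_of_nonneg_left hfx
            positivity
    have hle : |f x| ≤ 0 := ge_of_tendsto hlim hev
    have := abs_nonneg (f x)
    have : |f x| = 0 := le_antisymm hle this
    exact abs_eq_zero.mp this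
  -- endpoint values
  have hend : f (1-Q) = 0 ∧ f (-(1-Q)) = 0 ∧ f Q = 0 ∧ f (-Q) = 0 := by
    have e1 := heq' (1-Q)
    have e2 := heq' (-(1-Q))
    have e3 := heq' Q
    have e4 := heq' (-Q)
    have v1 : f (q*(1-Q)) = 0 := by
      apply hzero_mid
      rw [abs_of_pos (by positivity)]
      nlinarith
    have v2 : f (q*(-(1-Q))) = 0 := by
      apply hzero_mid
      rw [show q*(-(1-Q)) = -(q*(1-Q)) by ring, abs_neg,
        abs_of_pos (by positivity)]
      nlinarith
    have v3 : f ((1-Q)+1) = 0 := by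
      apply hQ; rw [abs_of_pos (by linarith)]; linarith
    have v4 : f (-(1-Q)-1) = 0 := by
      apply hQ
      rw [show -(1-Q)-1 = -((1-Q)+1) by ring, abs_neg, abs_of_pos (by linarith)]
      linarith
    have v5 : f (Q+1) = 0 := by
      apply hQ; rw [abs_of_pos (by linarith)]; linarith
    have v6 : f (-Q-1) = 0 := by
      apply hQ
      rw [show -Q-1 = -(Q+1) by ring, abs_neg, abs_of_pos (by linarith)]
      linarith
    rw [v1, show (1-Q)-1 = -Q by ring, v3] at e1
    rw [v2, show -(1-Q)-1 = -(1-Q)-1 by ring, v4, show -(1-Q)+1 = Q by ring] at e2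
    rw [show Q-1 = -(1-Q) by ring, v5] at e3
    rw [show q * -Q = -(q*Q) by ring, show -Q-1 = -Q-1 by rfl, v6,
      show -Q+1 = 1-Q by ring] at e4
    rcases lt_or_eq_of_le hqQ with hlt | heqQ
    · have u1 : f (q*Q) = 0 := by
        apply hzero_mid; rw [abs_of_pos (by positivity)]; exact hlt
      have u2 : f (-(q*Q)) = 0 := by
        apply hzero_mid; rw [abs_neg, abs_of_pos (by positivity)]; exact hlt
      rw [u1] at e3
      rw [u2] at e4
      refine ⟨by linarith, by linarith, by linarith, by linarith⟩
    · rw [heqQ] at e3 e4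
      -- e1 : 2a = -d - 0 (roughly), e2 : 2b = -c, e3 : 2c = 4q a - b, e4 : 2d = 4q b - a
      have k1 : 3 * f (1-Q) + 4*q*f (-(1-Q)) = 0 := by linarith
      have k2 : 3 * f (-(1-Q)) + 4*q*f (1-Q) = 0 := by linarith
      have ha : f (1-Q) = 0 := by
        have h9 : (9 - 16*q^2) * f (1-Q) = 0 := by linear_combination 3*k1 - 4*q*k2
        have hpos : (0:ℝ) < 9 - 16*q^2 := by nlinarith
        rcases mul_eq_zero.mp h9 with h | h
        · linarith
        · exact h
      have hb : f (-(1-Q)) = 0 := by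
        have : 4*q*f (-(1-Q)) = 0 := by linarith
        have := mul_eq_zero.mp this
        rcases this with h | h
        · nlinarith
        · exact h
      refine ⟨ha, hb, by linarith, by linarith⟩
  obtain ⟨ha, hb, hc, hd⟩ := hend
  -- closed middle ball
  have hcl : ∀ x : ℝ, |x| ≤ 1 - Q → f x = 0 := by
    intro x hx
    rcases lt_or_eq_of_le hx with h | h
    · exact hzero_mid x h
    · rcases (abs_eq (by linarith : (0:ℝ) ≤ 1 - Q)).mp h with h | h
      · rw [h]; exact ha
      · rw [h]; exact hb
  -- positive band
  have hband_pos : ∀ x : ℝ, 1 - Q < x → x ≤ Q → f x = 0 := by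
    intro x h1 h2
    have e := heq' x
    have ey := heq' (x-1)
    have v1 : f (x+1) = 0 := by
      apply hQ; rw [abs_of_pos (by linarith)]; linarith
    have v2 : f (q*x) = 0 := by
      apply hcl
      rw [abs_of_pos (by nlinarith)]
      nlinarith
    have v3 : f (q*(x-1)) = 0 := by
      apply hcl
      rw [abs_mul, abs_of_pos hq]
      have : |x - 1| ≤ Q := by
        rw [abs_le]; constructor <;> linarith
      nlinarith
    have v4 : f ((x-1)-1) = 0 := by
      apply hQ
      have : (1:ℝ) - (x-1) ≤ |(x-1) - 1| := by
        rw [abs_sub_comm]; exact le_abs_self _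
      linarith
    rw [v2, v1] at e
    rw [v3, v4, show (x-1)+1 = x by ring] at ey
    linarith
  -- negative band
  have hband_neg : ∀ x : ℝ, x < -(1 - Q) → -Q ≤ x → f x = 0 := by
    intro x h1 h2
    have e := heq' x
    have ey := heq' (x+1)
    have v1 : f (x-1) = 0 := by
      apply hQ
      have : (1:ℝ) - x ≤ |x - 1| := by
        rw [abs_sub_comm]; exact le_abs_self _
      linarith
    have v2 : f (q*x) = 0 := by
      apply hcl
      rw [abs_mul, abs_of_pos hq]
      have : |x| ≤ Q := by rw [abs_le]; constructor <;> linarith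
      nlinarith
    have v3 : f (q*(x+1)) = 0 := by
      apply hcl
      rw [abs_mul, abs_of_pos hq]
      have : |x + 1| ≤ Q := by rw [abs_le]; constructor <;> linarith
      nlinarith
    have v4 : f ((x+1)+1) = 0 := by
      apply hQ
      have : x + 2 ≤ |(x+1) + 1| := by
        have : x + 1 + 1 ≤ |x + 1 + 1| := le_abs_self _
        linarith
      linarith
    rw [v2, v1] at e
    rw [v3, v4, show (x+1)-1 = x by ring] at ey
    linarith
  -- conclusion
  intro x
  rcases le_or_gt (|x|) (1-Q) with h | h
  · exact hcl x h
  rcases le_or_gt (|x|) Q with h2 | h2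
  · rcases le_or_gt 0 x with hx | hx
    · rw [abs_of_nonneg hx] at h h2
      exact hband_pos x h h2
    · rw [abs_of_neg hx] at h h2
      exact hband_neg x (by linarith) (by linarith)
  · exact hQ x h2
end
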